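/- Assume d ≥ 3, and let M^α = {x ∈ M : x₁ = 0 and x₂ = 0} be the fixed point set of the modular flow e^{th} on anti-de Sitter space. Then G^h acts transitively on M^α: for all x, y ∈ M^α there exists g ∈ G^h with g·x = y. -/

import Mathlib

noncomputable section

/-- `V = ℝ^{d+1}`. -/
abbrev Vd (d : ℕ) : Type := Fin (d + 1) → ℝ

/-- The symmetric bilinear form `β(x,y) = x₀y₀ + x₁y₁ − x₂y₂ − ⋯ − x_dy_d`. -/
def betaB (d : ℕ) (x y : Vd d) : ℝ :=
  ∑ j : Fin (d + 1), (if (j : ℕ) ≤ 1 then (1 : ℝ) else -1) * x j * y j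

abbrev Mat (d : ℕ) : Type := Matrix (Fin (d + 1)) (Fin (d + 1)) ℝ

/-- The group `O(β)` of linear automorphisms of `V` preserving `β`,
as a set of matrices (with the subspace topology of `End(V)`). -/
def Obeta (d : ℕ) : Set (Mat d) :=
  {g | IsUnit g ∧ ∀ x y : Vd d, betaB d (g.mulVec x) (g.mulVec y) = betaB d x y}

/-- `G = SO_{2,d-1}(ℝ)_e`, the identity component of `O(β)`. -/
def Gset (d : ℕ) : Set (Mat d) := connectedComponentIn (Obeta d) 1

/-- Anti-de Sitter space `AdS^d = {x : β(x,x) = 1}`. -/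
def AdS (d : ℕ) : Set (Vd d) := {x | betaB d x x = 1}

/-- Standard basis vector `e_i`. -/
def evec (d : ℕ) (i : Fin (d + 1)) : Vd d := fun j => if j = i then 1 else 0

/-- The positive causal cone `V₊(e₀)` at the base point. -/
def Vplus (d : ℕ) : Set (Vd d) :=
  {v | betaB d (evec d 0) v = 0 ∧ 0 < betaB d v v ∧ 0 < betaB d v (evec d 1)}

/-- A pair `(x,y)` with `x ∈ M`, `β(x,y) = 0` is positive if some `g ∈ G`
moves it into the positive cone at the base point. -/
def posPair (d : ℕ) (x y : Vd d) : Prop :=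
  ∃ g ∈ Gset d, g.mulVec x = evec d 0 ∧ g.mulVec y ∈ Vplus d

/-- Representing `z = x + iy ∈ V_ℂ` as the pair `(x,y)`: the set
`M_ℂ ∩ (V + i V_{>0})`. -/
def TubeSrc (d : ℕ) : Set (Vd d × Vd d) :=
  {p | betaB d p.1 p.1 - betaB d p.2 p.2 = 1 ∧ betaB d p.1 p.2 = 0 ∧ 0 < betaB d p.2 p.2}

/-- The positive tube domain `𝒯_M⁺`: those `z = x + iy` in `M_ℂ ∩ 𝒯_V` for which
`Γ(z) = β(x,x)^{-1/2}(x,y)` is a positive pair. -/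
def TubePlus (d : ℕ) : Set (Vd d × Vd d) :=
  {p | p ∈ TubeSrc d ∧
    posPair d ((Real.sqrt (betaB d p.1 p.1))⁻¹ • p.1) ((Real.sqrt (betaB d p.1 p.1))⁻¹ • p.2)}

/-- The involution `τ_h = diag(1,−1,−1,1,…,1)`. -/
def tauh (d : ℕ) : Mat d :=
  Matrix.diagonal fun j : Fin (d + 1) => if (j : ℕ) = 1 ∨ (j : ℕ) = 2 then (-1 : ℝ) else 1

/-- The Euler element `h` with `h e₁ = e₂`, `h e₂ = e₁`, `h e_j = 0` otherwise. -/
def hmat (d : ℕ) : Mat d :=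
  Matrix.of fun i j : Fin (d + 1) =>
    if ((i : ℕ) = 1 ∧ (j : ℕ) = 2) ∨ ((i : ℕ) = 2 ∧ (j : ℕ) = 1) then (1 : ℝ) else 0

/-- The centralizer `G^h = {g ∈ G : gh = hg}`. -/
def Gh (d : ℕ) : Set (Mat d) := {g ∈ Gset d | g * hmat d = hmat d * g}

/-- The positivity domain `W_M⁺(h) = {x ∈ M : (x, hx) is positive}`. -/
def WplusDom (d : ℕ) : Set (Vd d) := {x ∈ AdS d | posPair d x ((hmat d).mulVec x)}

/-- `α_{it}(x) = (x₀, cos t·x₁ + i sin t·x₂, cos t·x₂ + i sin t·x₁, x₃, …, x_d)`,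
written as a pair (real part, imaginary part). -/
def alphaIt (d : ℕ) (t : ℝ) (x : Vd d) : Vd d × Vd d :=
  (fun j => if (j : ℕ) = 1 ∨ (j : ℕ) = 2 then Real.cos t * x j else x j,
   fun j => if (j : ℕ) = 1 then Real.sin t * x 2
            else if (j : ℕ) = 2 then Real.sin t * x 1 else 0)

/-- The KMS wedge domain `W_M^{KMS}(h)`. -/
def KMSdom (d : ℕ) : Set (Vd d) :=
  {x ∈ AdS d | ∀ t : ℝ, 0 < t → t < Real.pi → alphaIt d t x ∈ TubePlus d}

/-!
For `β`-unit vectors `a, b` the product `s_{a+b} ∘ s_a` of two reflections is an isometry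
carrying `a` to `b`, and it commutes with `h` when `h` kills `a` and `b`, since `h` is `β`-skew.
Take `a = e₀` and `b` on the upper sheet `x₀ ≥ 1` of `M^α`: sliding `b` back to `e₀` along the
sheet joins this isometry to the identity inside `O(β)`, so it lies in `G^h`. The lower sheet is
mapped to the upper one by `r = diag(-1,-1,-1,-1,1,…,1)`, which commutes with `h` and is the
product of the rotations by `π` in the `e₀e₁`- and `e₂e₃`-planes (this needs `d ≥ 3`), hence
lies in `G^h` too. So `G^h` moves every point of `M^α` to `e₀`.
-/

open Matrix

section carry

variable {K E : Type*} [Field K] [AddCommGroup E] [Module K E]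

/-- For `B a a = B b b = 1` this is `s_{a+b} ∘ s_a`, the product of the `B`-reflections in `a`
and in `a + b`. -/
def carryMap (B : LinearMap.BilinForm K E) (a b : E) : E →ₗ[K] E :=
  LinearMap.id - (1 + B a b)⁻¹ • (B (a + b)).smulRight (a + b) + (2 : K) • (B a).smulRight b

theorem carryMap_apply (B : LinearMap.BilinForm K E) (a b v : E) :
    carryMap B a b v = v - ((1 + B a b)⁻¹ * B (a + b) v) • (a + b) + (2 * B a v) • b := by
  simp [carryMap, mul_smul]

theorem carryMap_apply_left {B : LinearMap.BilinForm K E} (hB : B.IsSymm) {a b : E}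
    (ha : B a a = 1) (hab : 1 + B a b ≠ 0) : carryMap B a b a = b := by
  have : B (a + b) a = 1 + B a b := by rw [LinearMap.BilinForm.add_left, ha, hB.eq b a]
  rw [carryMap_apply, this, inv_mul_cancel₀ hab, ha]
  module

theorem carryMap_self [NeZero (2 : K)] {B : LinearMap.BilinForm K E} {a : E} (ha : B a a = 1) :
    carryMap B a a = LinearMap.id := by
  ext v
  rw [carryMap_apply, ha, LinearMap.id_apply]
  simp only [LinearMap.BilinForm.add_left, ← two_mul, mul_one,
    inv_mul_cancel_left₀ (two_ne_zero : (2 : K) ≠ 0)]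
  module

theorem carryMap_isometry {B : LinearMap.BilinForm K E} (hB : B.IsSymm) {a b : E}
    (ha : B a a = 1) (hb : B b b = 1) (hab : 1 + B a b ≠ 0) (v w : E) :
    B (carryMap B a b v) (carryMap B a b w) = B v w := by
  simp only [carryMap_apply, map_sub, map_add, map_smul, LinearMap.sub_apply,
    LinearMap.add_apply, LinearMap.smul_apply, smul_eq_mul, ha, hb, hB.eq b a, hB.eq v a,
    hB.eq v b]
  field_simp
  ring

theorem carryMap_commute {B : LinearMap.BilinForm K E} {a b : E} {A : E →ₗ[K] E}
    (hA : ∀ x y, B (A x) y = -B x (A y)) (hAa : A a = 0) (hAb : A b = 0) :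
    Commute (carryMap B a b) A := by
  ext v
  have hker : ∀ c, A c = 0 → B c (A v) = 0 := fun c hc => by
    rw [← neg_eq_zero, ← hA, hc, map_zero, LinearMap.zero_apply]
  simp [carryMap_apply, hker _ hAa, hker _ hAb, hAa, hAb]

end carry

section form

variable {d : ℕ}

def betaSign (d : ℕ) (j : Fin (d + 1)) : ℝ := if (j : ℕ) ≤ 1 then 1 else -1

theorem betaB_eq_sum (x y : Vd d) : betaB d x y = ∑ j, betaSign d j * x j * y j := rfl

def betaForm (d : ℕ) : LinearMap.BilinForm ℝ (Vd d) :=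
  LinearMap.mk₂ ℝ (betaB d)
    (fun x y z => by
      simp only [betaB_eq_sum, Pi.add_apply, ← Finset.sum_add_distrib]
      exact Finset.sum_congr rfl fun _ _ => by ring)
    (fun c x y => by
      simp only [betaB_eq_sum, Pi.smul_apply, smul_eq_mul, Finset.mul_sum]
      exact Finset.sum_congr rfl fun _ _ => by ring)
    (fun x y z => by
      simp only [betaB_eq_sum, Pi.add_apply, ← Finset.sum_add_distrib]
      exact Finset.sum_congr rfl fun _ _ => by ring)
    (fun c x y => by
      simp only [betaB_eq_sum, Pi.smul_apply, smul_eq_mul, Finset.mul_sum]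
      exact Finset.sum_congr rfl fun _ _ => by ring)

theorem betaForm_apply (x y : Vd d) : betaForm d x y = betaB d x y := rfl

theorem betaForm_isSymm : (betaForm d).IsSymm :=
  ⟨fun x y => show betaB d x y = betaB d y x from Finset.sum_congr rfl fun _ _ => by ring⟩

theorem betaB_single_left (j : Fin (d + 1)) (v : Vd d) :
    betaB d (Pi.single j 1) v = betaSign d j * v j := by
  simp [betaB_eq_sum, Pi.single_apply]

theorem betaB_single_right (j : Fin (d + 1)) (v : Vd d) :
    betaB d v (Pi.single j 1) = betaSign d j * v j := by
  rw [← betaForm_apply, betaForm_isSymm.eq, betaForm_apply, betaB_single_left]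

theorem evec_eq_single (i : Fin (d + 1)) : evec d i = Pi.single i 1 := by
  funext j
  simp [evec, Pi.single_apply]

theorem betaB_evec_zero_left (v : Vd d) : betaB d (evec d 0) v = v 0 := by
  simp [evec_eq_single, betaB_single_left, betaSign]

theorem betaB_evec_zero_right (v : Vd d) : betaB d v (evec d 0) = v 0 := by
  simp [evec_eq_single, betaB_single_right, betaSign]

theorem betaB_evec_zero_self : betaB d (evec d 0) (evec d 0) = 1 := by
  simp [betaB_evec_zero_left, evec]

@[fun_prop]
theorem Continuous.betaB {X : Type*} [TopologicalSpace X] {f g : X → Vd d} (hf : Continuous f)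
    (hg : Continuous g) : Continuous fun t => _root_.betaB d (f t) (g t) := by
  simp only [betaB_eq_sum]
  fun_prop

theorem betaB_mulVec_left_eq_neg {A : Mat d}
    (hA : ∀ i j, betaSign d i * A i j = -(betaSign d j * A j i)) (x y : Vd d) :
    betaB d (A *ᵥ x) y = -betaB d x (A *ᵥ y) := by
  simp only [betaB_eq_sum, mulVec, dotProduct, Finset.mul_sum, Finset.sum_mul,
    ← Finset.sum_neg_distrib]
  rw [Finset.sum_comm]
  refine Finset.sum_congr rfl fun j _ => Finset.sum_congr rfl fun i _ => ?_
  linear_combination (x j * y i) * hA i j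

end form

section group

theorem mul_mem_connectedComponentIn_one {M : Type*} [Monoid M] [TopologicalSpace M]
    [ContinuousMul M] {S : Set M} (hS : ∀ a ∈ S, ∀ b ∈ S, a * b ∈ S) {a b : M}
    (ha : a ∈ connectedComponentIn S 1) (hb : b ∈ connectedComponentIn S 1) :
    a * b ∈ connectedComponentIn S 1 := by
  have hone : (1 : M) ∈ S := connectedComponentIn_nonempty_iff.1 ⟨a, ha⟩
  have hsub : (a * ·) '' connectedComponentIn S 1 ⊆ connectedComponentIn S a :=
    (isPreconnected_connectedComponentIn.image _ (continuous_const_mul a).continuousOn)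
      |>.subset_connectedComponentIn ⟨1, mem_connectedComponentIn hone, mul_one a⟩
      (Set.image_subset_iff.2 fun c hc =>
        hS a (connectedComponentIn_subset _ _ ha) c (connectedComponentIn_subset _ _ hc))
  rw [connectedComponentIn_eq ha]
  exact hsub ⟨b, hb, rfl⟩

variable {d : ℕ}

theorem mem_Obeta_of_isometry {g : Mat d}
    (hg : ∀ x y, betaB d (g *ᵥ x) (g *ᵥ y) = betaB d x y) : g ∈ Obeta d := by
  refine ⟨Matrix.mulVec_injective_iff_isUnit.1 fun v w hvw => funext fun j => ?_, hg⟩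
  have h := hg (v - w) (Pi.single j 1)
  rw [mulVec_sub, hvw, sub_self, ← betaForm_apply, map_zero, LinearMap.zero_apply,
    betaB_single_right, Pi.sub_apply] at h
  have hs : betaSign d j ≠ 0 := by unfold betaSign; split_ifs <;> norm_num
  exact sub_eq_zero.1 ((mul_eq_zero.1 h.symm).resolve_left hs)

theorem mul_mem_Obeta {g g' : Mat d} (hg : g ∈ Obeta d) (hg' : g' ∈ Obeta d) :
    g * g' ∈ Obeta d :=
  mem_Obeta_of_isometry fun x y => by rw [← mulVec_mulVec, ← mulVec_mulVec, hg.2, hg'.2]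

theorem mul_mem_Gset {g g' : Mat d} (hg : g ∈ Gset d) (hg' : g' ∈ Gset d) :
    g * g' ∈ Gset d :=
  mul_mem_connectedComponentIn_one (fun _ ha _ hb => mul_mem_Obeta ha hb) hg hg'

theorem mul_mem_Gh {g g' : Mat d} (hg : g ∈ Gh d) (hg' : g' ∈ Gh d) : g * g' ∈ Gh d :=
  ⟨mul_mem_Gset hg.1 hg'.1, Commute.mul_left hg.2 hg'.2⟩

theorem mem_Gset_of_path {f : ℝ → Mat d} (hf : Continuous f) (hO : ∀ s, f s ∈ Obeta d)
    (h0 : f 0 = 1) (s : ℝ) : f s ∈ Gset d :=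
  (isPreconnected_range hf).subset_connectedComponentIn ⟨0, h0⟩ (Set.range_subset_iff.2 hO)
    ⟨s, rfl⟩

end group

section carryMat

variable {d : ℕ}

def carryMat (d : ℕ) (a b : Vd d) : Mat d := LinearMap.toMatrix' (carryMap (betaForm d) a b)

theorem carryMat_mulVec (a b v : Vd d) : carryMat d a b *ᵥ v = carryMap (betaForm d) a b v :=
  LinearMap.toMatrix'_mulVec _ _

theorem carryMat_mulVec_left {a b : Vd d} (ha : betaB d a a = 1) (hab : 1 + betaB d a b ≠ 0) :
    carryMat d a b *ᵥ a = b := by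
  rw [carryMat_mulVec, carryMap_apply_left betaForm_isSymm ha hab]

theorem carryMat_self {a : Vd d} (ha : betaB d a a = 1) : carryMat d a a = 1 := by
  rw [carryMat, carryMap_self (B := betaForm d) ha, LinearMap.toMatrix'_id]

theorem carryMat_mem_Obeta {a b : Vd d} (ha : betaB d a a = 1) (hb : betaB d b b = 1)
    (hab : 1 + betaB d a b ≠ 0) : carryMat d a b ∈ Obeta d :=
  mem_Obeta_of_isometry fun x y => by
    simp only [carryMat_mulVec]
    exact carryMap_isometry betaForm_isSymm ha hb hab x y

theorem carryMat_commute {a b : Vd d} {A : Mat d}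
    (hA : ∀ x y, betaB d (A *ᵥ x) y = -betaB d x (A *ᵥ y)) (hAa : A *ᵥ a = 0)
    (hAb : A *ᵥ b = 0) : Commute (carryMat d a b) A := by
  have hcomm := carryMap_commute (B := betaForm d) (A := Matrix.mulVecLin A) hA hAa hAb
  refine Matrix.ext_iff_mulVec.2 fun v => ?_
  simpa [← mulVec_mulVec, carryMat_mulVec] using LinearMap.congr_fun hcomm v

theorem continuous_carryMat {X : Type*} [TopologicalSpace X] {f g : X → Vd d}
    (hf : Continuous f) (hg : Continuous g) (hfg : ∀ t, 1 + betaB d (f t) (g t) ≠ 0) :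
    Continuous fun t => carryMat d (f t) (g t) := by
  refine continuous_pi fun i => continuous_pi fun j => ?_
  simp only [carryMat, LinearMap.toMatrix'_apply, carryMap_apply, betaForm_apply, Pi.add_apply,
    Pi.sub_apply, Pi.smul_apply, smul_eq_mul]
  fun_prop (disch := exact hfg)

end carryMat

section hmat

variable {d : ℕ}

theorem betaB_hmat_mulVec_left (x y : Vd d) :
    betaB d (hmat d *ᵥ x) y = -betaB d x (hmat d *ᵥ y) := by
  refine betaB_mulVec_left_eq_neg (fun i j => ?_) x y
  simp only [hmat, of_apply, betaSign]
  split_ifs <;> (try norm_num) <;> omega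

theorem hmat_mulVec_eq_zero (hd : 2 ≤ d) {x : Vd d} (hx1 : x 1 = 0) (hx2 : x 2 = 0) :
    hmat d *ᵥ x = 0 := by
  funext i
  simp only [mulVec, dotProduct, Pi.zero_apply]
  refine Finset.sum_eq_zero fun j _ => ?_
  simp only [hmat, of_apply]
  split_ifs with h
  · have hj : j = 1 ∨ j = 2 := by
      simp (disch := omega) [Fin.ext_iff, Nat.mod_eq_of_lt]
      omega
    rcases hj with rfl | rfl <;> simp [hx1, hx2]
  · simp

end hmat

section boost

variable {d : ℕ}

/-- The `e₀`-component is solved for so that `β(w, w) = 1`, using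
`β(x - x₀e₀, x - x₀e₀) = 1 - x₀²`. -/
def boostPath (d : ℕ) (x : Vd d) (s : ℝ) : Vd d :=
  s • (x - x 0 • evec d 0) + √(1 + s ^ 2 * (x 0 ^ 2 - 1)) • evec d 0

theorem boostPath_zero (x : Vd d) : boostPath d x 0 = evec d 0 := by
  simp [boostPath]

theorem boostPath_one {x : Vd d} (hx0 : 0 ≤ x 0) : boostPath d x 1 = x := by
  simp [boostPath, Real.sqrt_sq hx0]

theorem continuous_boostPath (x : Vd d) : Continuous (boostPath d x) := by
  unfold boostPath
  fun_prop

theorem betaB_evec_zero_boostPath (x : Vd d) (s : ℝ) :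
    betaB d (evec d 0) (boostPath d x s) = √(1 + s ^ 2 * (x 0 ^ 2 - 1)) := by
  simp [betaB_evec_zero_left, boostPath, evec]

theorem betaB_boostPath_self {x : Vd d} (hx : betaB d x x = 1) (hx0 : 1 ≤ x 0 ^ 2) (s : ℝ) :
    betaB d (boostPath d x s) (boostPath d x s) = 1 := by
  have hsq : √(1 + s ^ 2 * (x 0 ^ 2 - 1)) ^ 2 = 1 + s ^ 2 * (x 0 ^ 2 - 1) :=
    Real.sq_sqrt (by nlinarith [sq_nonneg s])
  simp only [boostPath, ← betaForm_apply, map_add, map_sub, map_smul, LinearMap.add_apply,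
    LinearMap.sub_apply, LinearMap.smul_apply, smul_eq_mul]
  simp only [betaForm_apply, betaB_evec_zero_left, betaB_evec_zero_right, hx]
  simp only [evec, ↓reduceIte]
  linear_combination hsq

theorem carryMat_evec_zero_mem_Gset {x : Vd d} (hx : betaB d x x = 1) (hx0 : 1 ≤ x 0) :
    carryMat d (evec d 0) x ∈ Gset d ∧ carryMat d x (evec d 0) ∈ Gset d := by
  have he := betaB_evec_zero_self (d := d)
  have hw := betaB_boostPath_self hx (by nlinarith)
  have hden : ∀ s, 1 + betaB d (evec d 0) (boostPath d x s) ≠ 0 := fun s => by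
    rw [betaB_evec_zero_boostPath]; positivity
  have hden' : ∀ s, 1 + betaB d (boostPath d x s) (evec d 0) ≠ 0 := fun s => by
    rw [← betaForm_apply, betaForm_isSymm.eq]; exact hden s
  have hc := continuous_boostPath (d := d) x
  have h1 := boostPath_one (d := d) (by linarith : 0 ≤ x 0)
  have h0 := boostPath_zero (d := d) x
  constructor
  · simpa [h1] using mem_Gset_of_path (continuous_carryMat continuous_const hc hden)
      (fun s => carryMat_mem_Obeta he (hw s) (hden s)) (by simp [h0, carryMat_self he]) 1
  · simpa [h1] using mem_Gset_of_path (continuous_carryMat hc continuous_const hden')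
      (fun s => carryMat_mem_Obeta (hw s) he (hden' s)) (by simp [h0, carryMat_self he]) 1

end boost

section sheets

variable {d : ℕ}

def planeRot (d : ℕ) (p q : Fin (d + 1)) (θ : ℝ) : Mat d :=
  1 + (Real.cos θ - 1) • (single p p 1 + single q q 1)
    + Real.sin θ • (single q p 1 - single p q 1)

theorem planeRot_mulVec (p q : Fin (d + 1)) (θ : ℝ) (v : Vd d) :
    planeRot d p q θ *ᵥ v = v + ((Real.cos θ - 1) * v p - Real.sin θ * v q) • Pi.single p 1
      + (Real.sin θ * v p + (Real.cos θ - 1) * v q) • Pi.single q 1 := by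
  simp only [planeRot, add_mulVec, sub_mulVec, smul_mulVec, one_mulVec, single_mulVec_eq]
  module

theorem planeRot_mem_Obeta {p q : Fin (d + 1)} (hpq : p ≠ q) (hs : betaSign d p = betaSign d q)
    (θ : ℝ) : planeRot d p q θ ∈ Obeta d := by
  refine mem_Obeta_of_isometry fun v w => ?_
  simp only [planeRot_mulVec, ← betaForm_apply, map_add, map_smul, LinearMap.add_apply,
    LinearMap.smul_apply, smul_eq_mul]
  simp only [betaForm_apply, betaB_single_left, betaB_single_right, Pi.single_apply, hpq,
    hpq.symm, if_true, if_false, hs]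
  linear_combination betaSign d q * (v p * w p + v q * w q) * Real.sin_sq_add_cos_sq θ

theorem planeRot_mem_Gset {p q : Fin (d + 1)} (hpq : p ≠ q) (hs : betaSign d p = betaSign d q)
    (θ : ℝ) : planeRot d p q θ ∈ Gset d :=
  mem_Gset_of_path (by unfold planeRot; fun_prop) (planeRot_mem_Obeta hpq hs)
    (by simp [planeRot]) θ

theorem planeRot_pi {p q : Fin (d + 1)} (hpq : p ≠ q) :
    planeRot d p q Real.pi = diagonal fun i => if i = p ∨ i = q then -1 else 1 := by
  ext i j
  simp only [planeRot, Real.cos_pi, Real.sin_pi, zero_smul, add_zero, Matrix.add_apply,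
    Matrix.smul_apply, Matrix.zero_apply, one_apply, single_apply, diagonal_apply, smul_eq_mul]
  split_ifs <;> grind

def rmat (d : ℕ) : Mat d := diagonal fun j => if (j : ℕ) ≤ 3 then -1 else 1

theorem rmat_eq (hd : 3 ≤ d) : planeRot d 0 1 Real.pi * planeRot d 2 3 Real.pi = rmat d := by
  rw [planeRot_pi (by simp (disch := omega) [Fin.ext_iff, Nat.mod_eq_of_lt]),
    planeRot_pi (by simp (disch := omega) [Fin.ext_iff, Nat.mod_eq_of_lt]),
    diagonal_mul_diagonal, rmat]
  congr 1
  funext i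
  simp (disch := omega) only [Fin.ext_iff, Fin.coe_ofNat_eq_mod, Nat.mod_eq_of_lt]
  split_ifs <;> first | omega | norm_num

theorem rmat_mul_self : rmat d * rmat d = 1 := by
  rw [rmat, diagonal_mul_diagonal, ← diagonal_one]
  congr 1
  funext i
  split_ifs <;> norm_num

theorem rmat_commute_hmat : Commute (rmat d) (hmat d) := by
  ext i j
  simp only [rmat, diagonal_mul, mul_diagonal, hmat, of_apply]
  split_ifs <;> first | omega | ring

theorem rmat_mem_Gh (hd : 3 ≤ d) : rmat d ∈ Gh d := by
  have h01 : betaSign d 0 = betaSign d 1 := by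
    simp (disch := omega) [betaSign, Nat.mod_eq_of_lt]
  have h23 : betaSign d 2 = betaSign d 3 := by
    simp (disch := omega) [betaSign, Nat.mod_eq_of_lt]
  refine ⟨rmat_eq hd ▸ mul_mem_Gset (planeRot_mem_Gset ?_ h01 _) (planeRot_mem_Gset ?_ h23 _),
    rmat_commute_hmat⟩ <;> simp (disch := omega) [Fin.ext_iff, Nat.mod_eq_of_lt]

end sheets

section fixedSet

variable {d : ℕ}

def modularFixedSet (d : ℕ) : Set (Vd d) := {z ∈ AdS d | z 1 = 0 ∧ z 2 = 0}

theorem betaB_self_le (hd : 1 ≤ d) (x : Vd d) : betaB d x x ≤ x 0 ^ 2 + x 1 ^ 2 := by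
  have h01 : (0 : Fin (d + 1)) ≠ 1 := by simp (disch := omega) [Fin.ext_iff, Nat.mod_eq_of_lt]
  calc betaB d x x ≤ ∑ j : Fin (d + 1), if (j : ℕ) ≤ 1 then x j ^ 2 else 0 :=
        Finset.sum_le_sum fun j _ => by
          split_ifs <;> nlinarith [sq_nonneg (x j)]
    _ = x 0 ^ 2 + x 1 ^ 2 := by
        rw [Fintype.sum_eq_add 0 1 h01 fun j hj => if_neg ?_]
        · simp (disch := omega) [Nat.mod_eq_of_lt]
        · simp (disch := omega) only [ne_eq, Fin.ext_iff, Fin.coe_ofNat_eq_mod,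
            Nat.mod_eq_of_lt] at hj
          omega

theorem one_le_sq_of_mem_modularFixedSet (hd : 1 ≤ d) {x : Vd d} (hx : x ∈ modularFixedSet d) :
    1 ≤ x 0 ^ 2 := by
  have := betaB_self_le hd x
  rw [hx.1, hx.2.1] at this
  linarith

theorem rmat_mulVec_mem_modularFixedSet (hd : 3 ≤ d) {x : Vd d} (hx : x ∈ modularFixedSet d) :
    rmat d *ᵥ x ∈ modularFixedSet d ∧ (rmat d *ᵥ x) 0 = -x 0 := by
  obtain ⟨hxM, hx1, hx2⟩ := hx
  refine ⟨⟨?_, ?_, ?_⟩, ?_⟩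
  · exact ((rmat_mem_Gh hd).1 |> connectedComponentIn_subset _ _).2 x x |>.trans hxM
  all_goals simp (disch := omega) [rmat, mulVec_diagonal, Nat.mod_eq_of_lt, hx1, hx2]

theorem carryMat_mem_Gh (hd : 2 ≤ d) {x : Vd d} (hx : x ∈ modularFixedSet d) (hx0 : 1 ≤ x 0) :
    carryMat d (evec d 0) x ∈ Gh d ∧ carryMat d x (evec d 0) ∈ Gh d := by
  have he : hmat d *ᵥ evec d 0 = 0 :=
    hmat_mulVec_eq_zero hd (by simp (disch := omega) [evec, Fin.ext_iff, Nat.mod_eq_of_lt])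
      (by simp (disch := omega) [evec, Fin.ext_iff, Nat.mod_eq_of_lt])
  have hx' : hmat d *ᵥ x = 0 := hmat_mulVec_eq_zero hd hx.2.1 hx.2.2
  obtain ⟨h1, h2⟩ := carryMat_evec_zero_mem_Gset hx.1 hx0
  exact ⟨⟨h1, carryMat_commute betaB_hmat_mulVec_left he hx'⟩,
    ⟨h2, carryMat_commute betaB_hmat_mulVec_left hx' he⟩⟩

theorem exists_mem_Gh_mulVec_evec_zero (hd : 3 ≤ d) {x : Vd d} (hx : x ∈ modularFixedSet d) :
    ∃ g ∈ Gh d, ∃ g' ∈ Gh d, g *ᵥ x = evec d 0 ∧ g' *ᵥ evec d 0 = x := by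
  wlog hx0 : 1 ≤ x 0 generalizing x
  · obtain ⟨hrx, hrx0⟩ := rmat_mulVec_mem_modularFixedSet hd hx
    have hx0' : x 0 ≤ -1 := by nlinarith [one_le_sq_of_mem_modularFixedSet (by omega) hx]
    obtain ⟨g, hg, g', hg', hgx, hg'x⟩ := this hrx (by linarith)
    refine ⟨g * rmat d, mul_mem_Gh hg (rmat_mem_Gh hd), rmat d * g',
      mul_mem_Gh (rmat_mem_Gh hd) hg', by rw [← mulVec_mulVec, hgx], ?_⟩
    rw [← mulVec_mulVec, hg'x, mulVec_mulVec, rmat_mul_self, one_mulVec]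
  obtain ⟨h1, h2⟩ := carryMat_mem_Gh (by omega) hx hx0
  refine ⟨_, h2, _, h1, carryMat_mulVec_left hx.1 ?_,
    carryMat_mulVec_left betaB_evec_zero_self ?_⟩
  · rw [betaB_evec_zero_right]; linarith
  · rw [betaB_evec_zero_left]; linarith

end fixedSet

/-- For `d ≥ 3`, the centralizer `G^h` acts transitively on the fixed point set
`M^α = {x ∈ M : x₁ = x₂ = 0}` of the modular flow. -/
theorem stmt15 (d : ℕ) (hd : 3 ≤ d) :
    ∀ x ∈ {z ∈ AdS d | z 1 = 0 ∧ z 2 = 0},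
      ∀ y ∈ {z ∈ AdS d | z 1 = 0 ∧ z 2 = 0},
        ∃ g ∈ Gh d, g.mulVec x = y := by
  intro x hx y hy
  obtain ⟨g, hg, -, -, hgx, -⟩ := exists_mem_Gh_mulVec_evec_zero hd hx
  obtain ⟨-, -, g', hg', -, hg'y⟩ := exists_mem_Gh_mulVec_evec_zero hd hy
  exact ⟨g' * g, mul_mem_Gh hg' hg, by rw [← mulVec_mulVec, hgx, hg'y]⟩
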